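/- Let $g$ be continuous on $[E_0,\infty)$ and let $\mathcal{A}g(E) = \int_{E_0}^E \sqrt{E-u}\, g(u)\, du$. Then $\left(\frac{4}{\pi} \frac{d^2}{dE^2} \mathcal{A} \frac{d}{dE} \mathcal{A}\right) g(E) = g(E)$; i.e. the composition $\frac{4}{\pi}\, \partial_E^2 \circ \mathcal{A} \circ \partial_E \circ \mathcal{A}$ is the identity on continuous functions. -/

import Mathlib

/-!
Up to constants, `𝒜` is the Riemann–Liouville integral of order `3/2`, and the theorem is the
semigroup law `I^{3/2} I^{1/2} = I^2`. Swapping the order of integration over the triangle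
`a < u < s < x` and using `∫ s in u..x, (s - u)^(-1/2) = 2 √(x - u)` shows that `𝒜 g` is the
primitive of `H`, half of Abel's integral of `g`. Written as
`H s = ∫ t in 0..√(s - a), g (s - t²)`, `H` is visibly continuous, so `∂𝒜 g = H`. A second swap,
now with the Beta integral `∫ s in u..x, √(x - s) (s - u)^(-1/2) = π/2 (x - u)`, gives
`𝒜 H x = π/4 ∫ u in a..x, (x - u) g u`, whose second derivative is `π/4 g`. A `g` continuous
on `[a, ∞)` is first extended continuously to `ℝ`, which changes nothing since `𝒜` only sees
the values on `(a, ∞)`.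
-/

open Real intervalIntegral MeasureTheory Set Filter

theorem integral_rpow_neg_half_mul_eq_integral_sq (f : ℝ → ℝ) {r : ℝ} (hr : 0 ≤ r) :
    ∫ w in 0..r ^ 2, w ^ (-(1 / 2) : ℝ) * f w = 2 * ∫ t in 0..r, f (t ^ 2) := by
  have hsubst := integral_comp_mul_deriv_of_deriv_nonneg (a := 0) (b := r)
    (g := fun w => w ^ (-(1 / 2) : ℝ) * f w) (f' := fun t => 2 * t)
    (continuous_pow 2).continuousOn (fun t _ => hasDerivAt_pow 2 t |>.congr_deriv (by ring))
    (fun t ht => by simp only [min_eq_left hr, mem_Ioo] at ht; linarith)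
  rw [zero_pow two_ne_zero] at hsubst
  rw [← intervalIntegral.integral_const_mul, ← hsubst]
  refine integral_congr_ae (Eventually.of_forall fun t ht => ?_)
  rw [uIoc_of_le hr] at ht
  have hsq : (t ^ 2) ^ (-(1 / 2) : ℝ) = t⁻¹ := by
    rw [rpow_neg (sq_nonneg t), ← sqrt_eq_rpow, sqrt_sq ht.1.le]
  simp only [Function.comp, hsq]
  field_simp [ht.1.ne']

theorem integral_sqrt_one_sub_sq_zero_one : ∫ t in (0 : ℝ)..1, √(1 - t ^ 2) = π / 4 := by
  have hsymm := integral_comp_neg (a := (0 : ℝ)) (b := 1) fun t => √(1 - t ^ 2)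
  simp only [neg_sq, neg_zero] at hsymm
  have hcont : Continuous fun t : ℝ => √(1 - t ^ 2) := by fun_prop
  have := integral_add_adjacent_intervals (hcont.intervalIntegrable (μ := volume) (-1) 0)
    (hcont.intervalIntegrable 0 1)
  rw [← hsymm, integral_sqrt_one_sub_sq] at this
  linarith

theorem integral_sqrt_sq_sub_sq {r : ℝ} (hr : 0 ≤ r) :
    ∫ t in 0..r, √(r ^ 2 - t ^ 2) = π / 4 * r ^ 2 := by
  rcases hr.eq_or_lt with rfl | hr
  · simp
  have hscale := integral_comp_mul_left (a := 0) (b := 1) (fun t => √(r ^ 2 - t ^ 2)) hr.ne'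
  have hfactor : ∀ t : ℝ, √(r ^ 2 - (r * t) ^ 2) = r * √(1 - t ^ 2) := fun t => by
    rw [show r ^ 2 - (r * t) ^ 2 = r ^ 2 * (1 - t ^ 2) by ring, sqrt_mul (sq_nonneg r),
      sqrt_sq hr.le]
  simp only [hfactor, intervalIntegral.integral_const_mul, integral_sqrt_one_sub_sq_zero_one,
    mul_zero, mul_one, smul_eq_mul] at hscale
  field_simp at hscale ⊢
  linarith

def triangle (a b : ℝ) : Set (ℝ × ℝ) := {p | a < p.2 ∧ p.2 < p.1 ∧ p.1 < b}

theorem measurableSet_triangle (a b : ℝ) : MeasurableSet (triangle a b) :=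
  ((isOpen_lt continuous_const continuous_snd).inter ((isOpen_lt continuous_snd
    continuous_fst).inter (isOpen_lt continuous_fst continuous_const))).measurableSet

theorem intervalIntegral_eq_integral_indicator_Ioo {f : ℝ → ℝ} {a b : ℝ} (hab : a ≤ b) :
    ∫ x in a..b, f x = ∫ x, (Ioo a b).indicator f x := by
  rw [integral_of_le hab, integral_Ioc_eq_integral_Ioo,
    MeasureTheory.integral_indicator measurableSet_Ioo]

theorem integral_integral_swap_triangle {a b : ℝ} (hab : a ≤ b) {f : ℝ → ℝ → ℝ}
    (hf : IntegrableOn (Function.uncurry f) (triangle a b)) :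
    ∫ s in a..b, ∫ u in a..s, f s u = ∫ u in a..b, ∫ s in u..b, f s u := by
  set K := (triangle a b).indicator (Function.uncurry f)
  have hK : Integrable (Function.uncurry fun s u => K (s, u)) (volume.prod volume) :=
    (integrable_indicator_iff (measurableSet_triangle a b)).2 hf
  have hleft : ∫ s in a..b, ∫ u in a..s, f s u = ∫ s, ∫ u, K (s, u) := by
    rw [intervalIntegral_eq_integral_indicator_Ioo hab]
    congr 1 with s
    by_cases hs : s ∈ Ioo a b
    · rw [indicator_of_mem hs, intervalIntegral_eq_integral_indicator_Ioo hs.1.le]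
      congr 1 with u
      simp only [K, Set.indicator, triangle, mem_Ioo, Function.uncurry]
      grind
    · rw [indicator_of_notMem hs, eq_comm]
      refine integral_eq_zero_of_ae (Eventually.of_forall fun u => indicator_of_notMem ?_ _)
      exact fun h => hs ⟨h.1.trans h.2.1, h.2.2⟩
  have hright : ∫ u in a..b, ∫ s in u..b, f s u = ∫ u, ∫ s, K (s, u) := by
    rw [intervalIntegral_eq_integral_indicator_Ioo hab]
    congr 1 with u
    by_cases hu : u ∈ Ioo a b
    · rw [indicator_of_mem hu, intervalIntegral_eq_integral_indicator_Ioo hu.2.le]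
      congr 1 with s
      simp only [K, Set.indicator, triangle, mem_Ioo, Function.uncurry]
      grind
    · rw [indicator_of_notMem hu, eq_comm]
      refine integral_eq_zero_of_ae (Eventually.of_forall fun s => indicator_of_notMem ?_ _)
      exact fun h => hu ⟨h.1, h.2.1.trans h.2.2⟩
  rw [hleft, hright, integral_integral_swap hK]

theorem integrableOn_triangle_of_norm_le {a b : ℝ} {F : ℝ × ℝ → ℝ} {φ : ℝ → ℝ}
    (hF : AEStronglyMeasurable F (volume.restrict (triangle a b)))
    (hφ : IntegrableOn φ (Ioo 0 (b - a)))
    (hle : ∀ p ∈ triangle a b, ‖F p‖ ≤ φ (p.1 - p.2)) :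
    IntegrableOn F (triangle a b) := by
  have hdom : Integrable (fun p : ℝ × ℝ =>
      (Icc a b).indicator 1 p.2 * (Ioo 0 (b - a)).indicator φ (p.1 - p.2)) (volume.prod volume) :=
    Integrable.convolution_integrand (ContinuousLinearMap.mul ℝ ℝ)
      ((integrable_indicator_iff measurableSet_Icc).2 (integrableOn_const measure_Icc_lt_top.ne))
      ((integrable_indicator_iff measurableSet_Ioo).2 hφ)
  refine hdom.integrableOn.mono' hF (ae_restrict_of_forall_mem (measurableSet_triangle a b) ?_)
  rintro ⟨s, u⟩ ⟨hau, hus, hsb⟩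
  have hu : u ∈ Icc a b := ⟨hau.le, by linarith⟩
  have hsu : s - u ∈ Ioo 0 (b - a) := ⟨by linarith, by linarith⟩
  simpa [indicator_of_mem hu, indicator_of_mem hsu] using hle (s, u) ⟨hau, hus, hsb⟩

/-- Half of Abel's integral `∫ u in a..s, f u / √(s - u)`, after the substitution `u = s - t ^ 2`
that removes the singularity of the kernel. -/
noncomputable def abelIntegral (a : ℝ) (f : ℝ → ℝ) (s : ℝ) : ℝ :=
  ∫ t in 0..√(s - a), f (s - t ^ 2)

theorem continuous_abelIntegral {f : ℝ → ℝ} (hf : Continuous f) (a : ℝ) :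
    Continuous (abelIntegral a f) :=
  continuous_parametric_intervalIntegral_of_continuous (by fun_prop) (by fun_prop)

theorem integral_sub_rpow_neg_half_mul_eq_abelIntegral (f : ℝ → ℝ) {a s : ℝ} (has : a ≤ s) :
    ∫ u in a..s, (s - u) ^ (-(1 / 2) : ℝ) * f u = 2 * abelIntegral a f s := by
  have hreflect := integral_comp_sub_left (a := a) (b := s)
    (fun w => w ^ (-(1 / 2) : ℝ) * f (s - w)) s
  simp only [sub_sub_cancel, sub_self] at hreflect
  rw [hreflect, ← sq_sqrt (sub_nonneg.2 has),
    integral_rpow_neg_half_mul_eq_integral_sq _ (sqrt_nonneg _), abelIntegral]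

theorem integral_mul_sub_rpow_neg_half_eq_integral_sq (k : ℝ → ℝ) {u x : ℝ}
    (hux : u ≤ x) :
    ∫ s in u..x, k (x - s) * (s - u) ^ (-(1 / 2) : ℝ) =
      2 * ∫ t in 0..√(x - u), k (x - u - t ^ 2) := by
  have hshift := integral_comp_sub_right (a := u) (b := x)
    (fun w => w ^ (-(1 / 2) : ℝ) * k (x - u - w)) u
  simp only [sub_sub_sub_cancel_right, sub_self] at hshift
  simp_rw [mul_comm (k _)]
  rw [hshift, ← sq_sqrt (sub_nonneg.2 hux),
    integral_rpow_neg_half_mul_eq_integral_sq _ (sqrt_nonneg _), sq_sqrt (sub_nonneg.2 hux)]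

theorem integral_mul_integral_rpow_neg_half_swap {k g : ℝ → ℝ} (hk : Continuous k)
    (hg : Continuous g) {a x : ℝ} (hax : a ≤ x) :
    ∫ s in a..x, k (x - s) * ∫ u in a..s, (s - u) ^ (-(1 / 2) : ℝ) * g u =
      ∫ u in a..x, (∫ s in u..x, k (x - s) * (s - u) ^ (-(1 / 2) : ℝ)) * g u := by
  obtain ⟨Ck, hCk⟩ :=
    isCompact_Icc.exists_bound_of_continuousOn (s := Icc 0 (x - a)) hk.continuousOn
  obtain ⟨Cg, hCg⟩ :=
    isCompact_Icc.exists_bound_of_continuousOn (s := Icc a x) hg.continuousOn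
  have hCk0 : 0 ≤ Ck := (norm_nonneg _).trans (hCk 0 ⟨le_rfl, sub_nonneg.2 hax⟩)
  have hint : IntegrableOn
      (Function.uncurry fun s u => k (x - s) * (s - u) ^ (-(1 / 2) : ℝ) * g u)
      (triangle a x) := by
    refine integrableOn_triangle_of_norm_le (φ := fun w => Ck * Cg * w ^ (-(1 / 2) : ℝ))
      (Measurable.aestronglyMeasurable (by fun_prop)) ?_ ?_
    · exact ((intervalIntegrable_iff_integrableOn_Ioo_of_le (sub_nonneg.2 hax)).1
        (intervalIntegrable_rpow' (by norm_num))).const_mul _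
    · rintro ⟨s, u⟩ ⟨hau, hus, hsx⟩
      have hrpow : 0 ≤ (s - u) ^ (-(1 / 2) : ℝ) := rpow_nonneg (by linarith) _
      rw [Function.uncurry_apply_pair, norm_mul, norm_mul, norm_of_nonneg hrpow]
      calc ‖k (x - s)‖ * (s - u) ^ (-(1 / 2) : ℝ) * ‖g u‖
          ≤ Ck * (s - u) ^ (-(1 / 2) : ℝ) * Cg := by
            gcongr
            · exact hCk _ ⟨by linarith, by linarith⟩
            · exact hCg _ ⟨hau.le, by linarith⟩
        _ = Ck * Cg * (s - u) ^ (-(1 / 2) : ℝ) := by ring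
  simp_rw [← intervalIntegral.integral_const_mul, ← intervalIntegral.integral_mul_const,
    ← mul_assoc]
  exact integral_integral_swap_triangle hax hint

theorem integral_mul_abelIntegral {k g : ℝ → ℝ} (hk : Continuous k) (hg : Continuous g) {a x : ℝ}
    (hax : a ≤ x) :
    ∫ s in a..x, k (x - s) * abelIntegral a g s =
      ∫ u in a..x, (∫ t in 0..√(x - u), k (x - u - t ^ 2)) * g u := by
  have hleft : EqOn (fun s => k (x - s) * abelIntegral a g s)
      (fun s => (k (x - s) * ∫ u in a..s, (s - u) ^ (-(1 / 2) : ℝ) * g u) / 2) (uIcc a x) := by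
    intro s hs
    rw [uIcc_of_le hax] at hs
    simp only [integral_sub_rpow_neg_half_mul_eq_abelIntegral g hs.1]
    ring
  have hright : EqOn (fun u => (∫ s in u..x, k (x - s) * (s - u) ^ (-(1 / 2) : ℝ)) * g u)
      (fun u => 2 * ((∫ t in 0..√(x - u), k (x - u - t ^ 2)) * g u)) (uIcc a x) := by
    intro u hu
    rw [uIcc_of_le hax] at hu
    simp only [integral_mul_sub_rpow_neg_half_eq_integral_sq k hu.2]
    ring
  rw [integral_congr hleft, intervalIntegral.integral_div,
    integral_mul_integral_rpow_neg_half_swap hk hg hax, integral_congr hright,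
    intervalIntegral.integral_const_mul]
  ring

noncomputable def sqrtKernelIntegral (a : ℝ) (f : ℝ → ℝ) (x : ℝ) : ℝ :=
  ∫ u in a..x, √(x - u) * f u

theorem sqrtKernelIntegral_congr {a : ℝ} {f f' : ℝ → ℝ} (h : EqOn f f' (Ioi a)) :
    EqOn (sqrtKernelIntegral a f) (sqrtKernelIntegral a f') (Ici a) := by
  intro x hx
  refine integral_congr_ae (Eventually.of_forall fun u hu => ?_)
  rw [uIoc_of_le hx] at hu
  rw [h hu.1]

theorem deriv_sqrtKernelIntegral_congr {a : ℝ} {f f' : ℝ → ℝ} (h : EqOn f f' (Ioi a)) :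
    EqOn (deriv (sqrtKernelIntegral a f)) (deriv (sqrtKernelIntegral a f')) (Ioi a) :=
  ((sqrtKernelIntegral_congr h).mono Ioi_subset_Ici_self).deriv isOpen_Ioi

theorem sqrtKernelIntegral_eq_integral_abelIntegral {g : ℝ → ℝ} (hg : Continuous g) {a x : ℝ}
    (hax : a ≤ x) : sqrtKernelIntegral a g x = ∫ s in a..x, abelIntegral a g s := by
  simpa [sqrtKernelIntegral] using
    (integral_mul_abelIntegral (k := fun _ => 1) continuous_const hg hax).symm

theorem hasDerivAt_sqrtKernelIntegral {g : ℝ → ℝ} (hg : Continuous g) {a x : ℝ} (hax : a < x) :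
    HasDerivAt (sqrtKernelIntegral a g) (abelIntegral a g x) x :=
  ((continuous_abelIntegral hg a).integral_hasStrictDerivAt a x).hasDerivAt.congr_of_eventuallyEq
    ((eventually_gt_nhds hax).mono fun _ hy => sqrtKernelIntegral_eq_integral_abelIntegral hg hy.le)

theorem sqrtKernelIntegral_abelIntegral {g : ℝ → ℝ} (hg : Continuous g) {a x : ℝ} (hax : a ≤ x) :
    sqrtKernelIntegral a (abelIntegral a g) x = π / 4 * ∫ u in a..x, (x - u) * g u := by
  rw [sqrtKernelIntegral, integral_mul_abelIntegral (k := Real.sqrt) continuous_sqrt hg hax,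
    ← intervalIntegral.integral_const_mul]
  refine integral_congr fun u hu => ?_
  rw [uIcc_of_le hax] at hu
  have hquarter := integral_sqrt_sq_sub_sq (sqrt_nonneg (x - u))
  rw [sq_sqrt (sub_nonneg.2 hu.2)] at hquarter
  simp only [hquarter]
  ring

theorem hasDerivAt_integral_sub_mul {g : ℝ → ℝ} (hg : Continuous g) (a x : ℝ) :
    HasDerivAt (fun y => ∫ u in a..y, (y - u) * g u) (∫ u in a..x, g u) x := by
  have hug : Continuous fun u => u * g u := by fun_prop
  have hsplit : (fun y => ∫ u in a..y, (y - u) * g u) =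
      fun y => y * (∫ u in a..y, g u) - ∫ u in a..y, u * g u := by
    ext y
    simp_rw [sub_mul]
    rw [intervalIntegral.integral_sub ((hg.intervalIntegrable a y).const_mul y)
      (hug.intervalIntegrable a y), intervalIntegral.integral_const_mul]
  rw [hsplit]
  exact (((hasDerivAt_id' x).mul (hg.integral_hasStrictDerivAt a x).hasDerivAt).sub
    (hug.integral_hasStrictDerivAt a x).hasDerivAt).congr_deriv (by ring)

theorem deriv_deriv_sqrtKernelIntegral_deriv_sqrtKernelIntegral {g : ℝ → ℝ} (hg : Continuous g)
    {a x : ℝ} (hax : a < x) :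
    deriv (deriv (sqrtKernelIntegral a (deriv (sqrtKernelIntegral a g)))) x = π / 4 * g x := by
  have hinner : EqOn (deriv (sqrtKernelIntegral a g)) (abelIntegral a g) (Ioi a) :=
    fun y hy => (hasDerivAt_sqrtKernelIntegral hg hy).deriv
  have houter : EqOn (sqrtKernelIntegral a (deriv (sqrtKernelIntegral a g)))
      (fun y => π / 4 * ∫ u in a..y, (y - u) * g u) (Ioi a) := fun y hy =>
    (sqrtKernelIntegral_congr hinner (Ioi_subset_Ici_self hy)).trans
      (sqrtKernelIntegral_abelIntegral hg hy.le)
  have hfirst : EqOn (deriv (sqrtKernelIntegral a (deriv (sqrtKernelIntegral a g))))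
      (fun y => π / 4 * ∫ u in a..y, g u) (Ioi a) := fun y hy =>
    (houter.deriv isOpen_Ioi hy).trans ((hasDerivAt_integral_sub_mul hg a y).const_mul _).deriv
  exact (hfirst.deriv isOpen_Ioi hax).trans
    ((hg.integral_hasStrictDerivAt a x).hasDerivAt.const_mul _).deriv

/-- With `𝒜g(E) = ∫_{E₀}^E √(E-u) g(u) du`, the composition
`(4/π) ∂_E² ∘ 𝒜 ∘ ∂_E ∘ 𝒜` is the identity on continuous functions, for `E > E₀`. -/
theorem abel_type_inversion (E₀ : ℝ) (g : ℝ → ℝ) (hg : ContinuousOn g (Set.Ici E₀))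
    (A : (ℝ → ℝ) → ℝ → ℝ)
    (hA : ∀ f : ℝ → ℝ, ∀ E : ℝ, A f E = ∫ u in E₀..E, Real.sqrt (E - u) * f u)
    (E : ℝ) (hE : E₀ < E) :
    (4 / π) * deriv (deriv (A (fun u => deriv (A g) u))) E = g E := by
  obtain rfl : A = sqrtKernelIntegral E₀ := funext fun f => funext (hA f)
  set g' : ℝ → ℝ := fun u => g (max u E₀)
  have hg' : Continuous g' := hg.comp_continuous (by fun_prop) fun u => le_max_right u E₀
  have hgg' : EqOn g g' (Ioi E₀) := fun u (hu : E₀ < u) => by simp [g', max_eq_left hu.le]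
  rw [(deriv_sqrtKernelIntegral_congr (deriv_sqrtKernelIntegral_congr hgg')).deriv isOpen_Ioi hE,
    deriv_deriv_sqrtKernelIntegral_deriv_sqrtKernelIntegral hg' hE, ← hgg' hE]
  field_simp
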